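/- arXiv:1210.4434 — 3 statements merged into one kernel-verified Lean document; each statement's English description precedes it below -/
import Mathlib

section
/- Let q ≥ 2 and p₁, p₂ ≥ 1 be integers, let u₁, u₂, λ be nonzero complex numbers and b₁, b₂ ∈ ℂ. Then there is no formal power series g ∈ ℂ[[z₁, z₂]] with g(0) = 0 satisfying (1 − b₁z₁^{p₁} − b₂z₂^{p₂}) · g^q = λ(u₁ z₁^{p₁} + u₂ z₂^{p₂}). -/
/-!
Substituting `z₁ = x t^{p₂}`, `z₂ = t^{p₁}` sends `u₁ z₁^{p₁} + u₂ z₂^{p₂}` to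
`t^{p₁p₂} (u₁ x^{p₁} + u₂)` and the factor `1 - b₁ z₁^{p₁} - b₂ z₂^{p₂}` to a series in `t` with
constant term `1`, so the equation becomes one in `ℂ[x][[t]]`. The lowest nonzero coefficient in `t`
is multiplicative over the domain `ℂ[x]`, so comparing it on both sides gives `Q ∈ ℂ[x]` with
`Q^q = λ (u₁ x^{p₁} + u₂)`. But `λ (u₁ x^{p₁} + u₂)` is separable, hence squarefree, and not
constant, so it is not a `q`-th power for `q ≥ 2`.
-/

namespace PowerSeries

variable {R : Type*} [Semiring R]

theorem divXPowOrder_of_constantCoeff_ne_zero {f : R⟦X⟧} (hf : constantCoeff f ≠ 0) :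
    divXPowOrder f = f := by
  have hord : f.order = 0 := by
    by_contra h
    exact hf (order_ne_zero_iff_constCoeff_eq_zero.mp h)
  ext n
  simp [hord]

theorem divXPowOrder_C (r : R) : divXPowOrder (C r) = C r := by
  rcases eq_or_ne r 0 with rfl | hr
  · simp
  · exact divXPowOrder_of_constantCoeff_ne_zero (by simpa using hr)

variable [NoZeroDivisors R] [Nontrivial R]

theorem exists_pow_eq_of_mul_pow_eq_X_pow_mul_C {u h : R⟦X⟧} {q n : ℕ} {r : R}
    (hu : constantCoeff u = 1) (H : u * h ^ q = X ^ n * C r) : ∃ s : R, s ^ q = r := by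
  have hu' : divXPowOrder u = u := divXPowOrder_of_constantCoeff_ne_zero (by simp [hu])
  refine ⟨constantCoeff (divXPowOrder h), ?_⟩
  simpa [divXPowOrder_mul, divXPowOrder_pow, divXPowOrder_C, hu', hu] using
    congrArg (fun f => constantCoeff (divXPowOrder f)) H

end PowerSeries

namespace Polynomial

variable {F : Type*} [Field F]

theorem separable_C_mul_X_pow_add_C {n : ℕ} (hn : (n : F) ≠ 0) {a c : F} (ha : a ≠ 0)
    (hc : c ≠ 0) : (C a * X ^ n + C c).Separable := by
  have h : C a * X ^ n + C c = C a * (X ^ n - C (-c / a)) := by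
    rw [mul_sub, ← C_mul, mul_div_cancel₀ _ ha, C_neg, sub_neg_eq_add]
  rw [h]
  exact Separable.unit_mul (isUnit_C.mpr ha.isUnit)
    (separable_X_pow_sub_C _ hn (div_ne_zero (neg_ne_zero.mpr hc) ha))

theorem pow_ne_C_mul_X_pow_add_C {n q : ℕ} (hn : (n : F) ≠ 0) (hq : 2 ≤ q) {a c : F}
    (ha : a ≠ 0) (hc : c ≠ 0) (Q : F[X]) : Q ^ q ≠ C a * X ^ n + C c := by
  intro hQ
  have hQ_not_isUnit : ¬IsUnit Q := fun hunit => by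
    have h := natDegree_eq_zero_of_isUnit (hunit.pow q)
    rw [hQ, natDegree_add_C, natDegree_C_mul_X_pow n a ha] at h
    exact hn (by simp [h])
  have hsq : Squarefree (Q ^ q) := hQ ▸ (separable_C_mul_X_pow_add_C hn ha hc).squarefree
  have := hsq.eq_zero_or_one_of_pow_of_not_isUnit hQ_not_isUnit
  omega

end Polynomial

namespace MvPowerSeries

variable {K : Type*} [Field K]

variable (K) in
noncomputable def weightedCurve (p₁ p₂ : ℕ) : Fin 2 → PowerSeries (Polynomial K) :=
  ![PowerSeries.C Polynomial.X * PowerSeries.X ^ p₂, PowerSeries.X ^ p₁]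

theorem hasSubst_weightedCurve {p₁ p₂ : ℕ} (hp₁ : p₁ ≠ 0) (hp₂ : p₂ ≠ 0) :
    HasSubst (weightedCurve K p₁ p₂) :=
  hasSubst_of_constantCoeff_zero fun i => by
    fin_cases i <;> simp [weightedCurve, hp₁, hp₂, PowerSeries.X, constantCoeff_X]

theorem subst_weightedCurve {p₁ p₂ : ℕ} (hp₁ : p₁ ≠ 0) (hp₂ : p₂ ≠ 0) (a b : K) :
    subst (weightedCurve K p₁ p₂) (C a * X 0 ^ p₁ + C b * X 1 ^ p₂) =
      PowerSeries.X ^ (p₁ * p₂) *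
        PowerSeries.C (Polynomial.C a * Polynomial.X ^ p₁ + Polynomial.C b) := by
  rw [← coe_substAlgHom (hasSubst_weightedCurve hp₁ hp₂)]
  simp only [map_add, map_mul, map_pow, substAlgHom_X, c_eq_algebraMap, AlgHom.commutes]
  simp only [PowerSeries.algebraMap_apply (A := Polynomial K), Polynomial.algebraMap_apply,
    Algebra.algebraMap_self, RingHom.id_apply, weightedCurve, Matrix.cons_val_zero,
    Matrix.cons_val_one]
  ring

end MvPowerSeries

open MvPowerSeries in
theorem stmt_2 (q p₁ p₂ : ℕ) (hq : 2 ≤ q) (hp₁ : 1 ≤ p₁) (hp₂ : 1 ≤ p₂)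
    (u₁ u₂ lam : ℂ) (hu₁ : u₁ ≠ 0) (hu₂ : u₂ ≠ 0) (hlam : lam ≠ 0) (b₁ b₂ : ℂ) :
    ¬ ∃ g : MvPowerSeries (Fin 2) ℂ, constantCoeff (σ := Fin 2) (R := ℂ) g = 0 ∧
      (1 - C (σ := Fin 2) (R := ℂ) b₁ * (X 0) ^ p₁ - C (σ := Fin 2) (R := ℂ) b₂ * (X 1) ^ p₂) * g ^ q
        = C (σ := Fin 2) (R := ℂ) lam * (C (σ := Fin 2) (R := ℂ) u₁ * (X 0) ^ p₁ + C (σ := Fin 2) (R := ℂ) u₂ * (X 1) ^ p₂) := by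
  rintro ⟨g, -, hg⟩
  have hp₁' : p₁ ≠ 0 := by omega
  have hp₂' : p₂ ≠ 0 := by omega
  rw [sub_sub, mul_add, ← mul_assoc, ← mul_assoc, ← map_mul, ← map_mul] at hg
  have hcurve := congrArg (substAlgHom (R := ℂ) (hasSubst_weightedCurve (K := ℂ) hp₁' hp₂')) hg
  rw [map_mul, map_sub, map_one, map_pow] at hcurve
  simp only [substAlgHom_apply, subst_weightedCurve hp₁' hp₂'] at hcurve
  obtain ⟨Q, hQ⟩ := PowerSeries.exists_pow_eq_of_mul_pow_eq_X_pow_mul_C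
    (by simp [hp₁', hp₂']) hcurve
  exact Polynomial.pow_ne_C_mul_X_pow_add_C (by exact_mod_cast hp₁') hq (mul_ne_zero hlam hu₁)
    (mul_ne_zero hlam hu₂) Q hQ
end

section
/- Let p₁,...,pₙ and q₁,...,q_N be positive integers with q₁ = ... = q_s = 1 and q_k ≥ 2 for k > s. Suppose there exist K ⊆ {s+1,...,N} and σ: K → {1,...,n} with #σ(K) ≥ n − s and q_k | p_{σ(k)} for all k ∈ K. Write {1,...,n} \ σ(K) = {t₁,...,t_r} (so r ≤ s), and choose complex coefficients v_k for k ∈ K with Σ_{k∈σ⁻¹(l)} |v_k|^{2q_k} = 1 for each l ∈ σ(K). Define F: ℂⁿ → ℂ^N by F_k(z) = z_{t_k}^{p_{t_k}} for k = 1,...,r, F_k(z) = v_k z_{σ(k)}^{p_{σ(k)}/q_k} for k ∈ K, and F_k(z) = 0 otherwise. Then Σ_{k=1}^{N} |F_k(z)|^{2q_k} = Σ_{i=1}^{n} |z_i|^{2p_i} for all z ∈ ℂⁿ, so the map H(z,w) = (F(z), w) sends P^n_p into P^N_q. -/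
open Finset in
theorem stmt_8 (n N s : ℕ) (hsN : s ≤ N)
    (p : Fin n → ℕ) (hp : ∀ i, 1 ≤ p i)
    (q : Fin N → ℕ) (hq1 : ∀ j : Fin N, (j : ℕ) < s → q j = 1)
    (hq2 : ∀ j : Fin N, s ≤ (j : ℕ) → 2 ≤ q j)
    (K : Finset (Fin N)) (hK : ∀ j ∈ K, s ≤ (j : ℕ))
    (σ : Fin N → Fin n)
    (hcard : n - s ≤ (K.image σ).card)
    (hdvd : ∀ k ∈ K, q k ∣ p (σ k))
    (r : ℕ) (hr : r = (univ \ K.image σ : Finset (Fin n)).card) (hrs : r ≤ s)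
    (t : Fin r → Fin n) (htinj : Function.Injective t)
    (htmem : ∀ i, t i ∈ (univ \ K.image σ : Finset (Fin n)))
    (v : Fin N → ℂ)
    (hv : ∀ l ∈ K.image σ, ∑ k ∈ K.filter (fun k => σ k = l), ‖v k‖ ^ (2 * q k) = 1)
    (F : (Fin n → ℂ) → Fin N → ℂ)
    (hF : ∀ z : Fin n → ℂ, ∀ k : Fin N,
      F z k = if h : (k : ℕ) < r then z (t ⟨k, h⟩) ^ p (t ⟨k, h⟩)
        else if k ∈ K then v k * z (σ k) ^ (p (σ k) / q k) else 0) :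
    ∀ z : Fin n → ℂ, ∑ k, ‖F z k‖ ^ (2 * q k) = ∑ i, ‖z i‖ ^ (2 * p i) := by
  intro z
  have hq_pos : ∀ k : Fin N, 1 ≤ q k := by
    intro k
    rcases lt_or_ge (k : ℕ) s with h | h
    · exact (hq1 k h).ge
    · exact le_trans (by norm_num) (hq2 k h)
  set C : Finset (Fin n) := (univ \ K.image σ : Finset (Fin n)) with hC
  set A : Finset (Fin N) := univ.filter (fun k => (k : ℕ) < r) with hA
  have hdisj : Disjoint A K := by
    rw [Finset.disjoint_left]
    intro k hkA hkK
    have h1 : (k : ℕ) < r := (Finset.mem_filter.mp hkA).2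
    exact absurd (hK k hkK) (not_le.mpr (lt_of_lt_of_le h1 hrs))
  -- sum over univ reduces to A ∪ K
  have hsub : A ∪ K ⊆ univ := Finset.subset_univ _
  have hzero : ∀ k ∈ (univ : Finset (Fin N)), k ∉ A ∪ K → ‖F z k‖ ^ (2 * q k) = 0 := by
    intro k _ hk
    rw [Finset.mem_union, not_or] at hk
    have h1 : ¬ (k : ℕ) < r := fun h => hk.1 (Finset.mem_filter.mpr ⟨Finset.mem_univ _, h⟩)
    rw [hF z k, dif_neg h1, if_neg hk.2]
    simp only [norm_zero]
    exact zero_pow (by have := hq_pos k; omega)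
  rw [← Finset.sum_subset hsub hzero, Finset.sum_union hdisj]
  -- sum over A
  have hrN : r ≤ N := le_trans hrs hsN
  have hAsum : ∑ k ∈ A, ‖F z k‖ ^ (2 * q k) = ∑ i ∈ C, ‖z i‖ ^ (2 * p i) := by
    have hAeq : A = Finset.image (fun i : Fin r => (⟨(i : ℕ), lt_of_lt_of_le i.2 hrN⟩ : Fin N)) univ := by
      ext k
      simp only [hA, Finset.mem_filter, Finset.mem_univ, true_and, Finset.mem_image]
      constructor
      · intro h; refine ⟨⟨(k : ℕ), h⟩, ?_⟩; ext; rfl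
      · rintro ⟨i, _, rfl⟩; exact i.2
    have himg : Finset.image t univ = C := by
      apply Finset.eq_of_subset_of_card_le
      · intro x hx
        rw [Finset.mem_image] at hx
        obtain ⟨i, _, rfl⟩ := hx
        exact htmem i
      · rw [Finset.card_image_of_injective _ htinj, Finset.card_univ, Fintype.card_fin]; omega
    rw [hAeq, Finset.sum_image (by intro a _ b _ h; exact Fin.ext (by simpa using congrArg Fin.val h))]
    rw [← himg, Finset.sum_image (fun a _ b _ h => htinj h)]
    apply Finset.sum_congr rfl
    intro i _
    have hir : ((⟨(i : ℕ), lt_of_lt_of_le i.2 hrN⟩ : Fin N) : ℕ) < r := i.2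
    have hq : q (⟨(i : ℕ), lt_of_lt_of_le i.2 hrN⟩ : Fin N) = 1 :=
      hq1 _ (lt_of_lt_of_le i.2 hrs)
    rw [hF, dif_pos hir, hq]
    have : (⟨((⟨(i : ℕ), lt_of_lt_of_le i.2 hrN⟩ : Fin N) : ℕ), hir⟩ : Fin r) = i := by
      ext; rfl
    rw [this, norm_pow, ← pow_mul, mul_comm (p (t i)) 2]
  rw [hAsum]
  -- sum over K
  have hKsum : ∑ k ∈ K, ‖F z k‖ ^ (2 * q k) = ∑ l ∈ K.image σ, ‖z l‖ ^ (2 * p l) := by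
    have hterm : ∀ k ∈ K, ‖F z k‖ ^ (2 * q k)
        = ‖v k‖ ^ (2 * q k) * ‖z (σ k)‖ ^ (2 * p (σ k)) := by
      intro k hk
      have h1 : ¬ (k : ℕ) < r := not_lt.mpr (le_trans hrs (hK k hk))
      rw [hF, dif_neg h1, if_pos hk, norm_mul, mul_pow, norm_pow, ← pow_mul]
      congr 2
      rw [mul_comm (p (σ k) / q k) (2 * q k), mul_assoc, Nat.mul_div_cancel' (hdvd k hk)]
    rw [Finset.sum_congr rfl hterm]
    rw [← Finset.sum_fiberwise_of_maps_to (g := σ) (fun k hk => Finset.mem_image_of_mem σ hk)]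
    apply Finset.sum_congr rfl
    intro l hl
    have : ∀ k ∈ K.filter (fun k => σ k = l),
        ‖v k‖ ^ (2 * q k) * ‖z (σ k)‖ ^ (2 * p (σ k))
          = ‖v k‖ ^ (2 * q k) * ‖z l‖ ^ (2 * p l) := by
      intro k hk
      rw [(Finset.mem_filter.mp hk).2]
    rw [Finset.sum_congr rfl this, ← Finset.sum_mul, hv l hl, one_mul]
  rw [hKsum]
  rw [hC, Finset.sum_sdiff (Finset.subset_univ _)]
end

section
/- Let s, N be integers with 1 ≤ s ≤ N, let q_{s+1},...,q_N ≥ 2 be integers, b = (β, 0) ∈ ℂ^s × ℂ^{N−s}, and r ∈ ℝ. Define δ(z,w) = 1 − 2i⟨z^q, b̄⟩ − (r + i Σ_{j=1}^s |β_j|²) w, where z^q = (z₁,...,z_s, z_{s+1}^{q_{s+1}},...,z_N^{q_N}). Then the map Ψ(z,w) = ((z₁+β₁w)/δ, ..., (z_s+β_s w)/δ, z_{s+1}/δ^{1/q_{s+1}}, ..., z_N/δ^{1/q_N}, w/δ) satisfies: whenever (z,w) ∈ P^N_q with δ(z,w) ≠ 0 and we choose a q_j-th root of δ for each j, the image Ψ(z,w)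 lies on P^N_q, i.e., Im(w/δ) = Σ_{j=1}^{s} |(z_j+β_j w)/δ|² + Σ_{j=s+1}^{N} |z_j|^{2q_j}/|δ|². -/
/-!
With `A = Σ_{j ≤ s} z_j β̄_j` and `B = Σ_{j ≤ s} |β_j|²`, so that `δ = 1 - 2iA - (r + iB) w`,
expanding gives both `Im (w δ̄) = Im w + 2 Re (w Ā) + B |w|²` and
`Σ_{j ≤ s} |z_j + β_j w|² = Σ_{j ≤ s} |z_j|² + 2 Re (w Ā) + B |w|²`.
Hence on `P^N_q` the two differ by exactly `Σ_{j > s} |z_j|^{2q_j}`, and dividing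
`Im (w / δ) = Im (w δ̄) / |δ|²` by `|δ|²` gives the claim.
-/

open Complex ComplexConjugate Finset

namespace Complex

theorem im_div_eq_im_mul_conj_div_normSq (w δ : ℂ) :
    (w / δ).im = (w * conj δ).im / normSq δ := by
  rw [div_eq_mul_inv, inv_def, ← mul_assoc, im_mul_ofReal, div_eq_mul_inv]

theorem normSq_add_mul (a b w : ℂ) :
    normSq (a + b * w) = normSq a + 2 * (w * conj (a * conj b)).re + ‖b‖ ^ 2 * normSq w := by
  rw [← normSq_eq_norm_sq]
  simp only [normSq_apply, map_mul, conj_conj, mul_re, mul_im, add_re, add_im, conj_re, conj_im]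
  ring

theorem sum_normSq_add_mul {ι : Type*} (S : Finset ι) (z β : ι → ℂ) (w : ℂ) :
    ∑ j ∈ S, normSq (z j + β j * w)
      = ∑ j ∈ S, normSq (z j) + 2 * (w * conj (∑ j ∈ S, z j * conj (β j))).re
        + (∑ j ∈ S, ‖β j‖ ^ 2) * normSq w := by
  simp only [normSq_add_mul, sum_add_distrib, map_sum, mul_sum, re_sum, sum_mul]

theorem im_mul_conj_one_sub_two_I_mul_sub_mul (A w : ℂ) (r B : ℝ) :
    (w * conj (1 - 2 * I * A - (r + I * B) * w)).im
      = w.im + 2 * (w * conj A).re + B * normSq w := by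
  simp only [map_sub, map_mul, map_add, map_one, map_ofNat, conj_I, conj_ofReal, mul_im, mul_re,
    sub_im, sub_re, add_im, add_re, one_im, one_re, I_re, I_im, conj_re, conj_im, ofReal_re,
    ofReal_im, normSq_apply, re_ofNat, im_ofNat, neg_re, neg_im]
  ring

end Complex

/-- The denominator `δ(z, w)` of the parabolic automorphism `Ψ_{b,r}`, for `b = (β, 0)` with `β`
supported on `S`. -/
noncomputable def parabolicDenom {ι : Type*} (S : Finset ι) (z β : ι → ℂ) (r : ℝ) (w : ℂ) : ℂ :=
  1 - 2 * I * ∑ j ∈ S, z j * conj (β j) - (r + I * ∑ j ∈ S, (‖β j‖ ^ 2 : ℝ)) * w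

theorem im_div_parabolicDenom {ι : Type*} (S : Finset ι) (z β : ι → ℂ) (r R : ℝ) (w : ℂ)
    (hw : w.im = ∑ j ∈ S, ‖z j‖ ^ 2 + R) :
    (w / parabolicDenom S z β r w).im
      = ∑ j ∈ S, ‖(z j + β j * w) / parabolicDenom S z β r w‖ ^ 2
        + R / ‖parabolicDenom S z β r w‖ ^ 2 := by
  set δ := parabolicDenom S z β r w with hδ
  have key : (w * conj δ).im = ∑ j ∈ S, normSq (z j + β j * w) + R := by
    rw [hδ, parabolicDenom, im_mul_conj_one_sub_two_I_mul_sub_mul, sum_normSq_add_mul, hw]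
    simp only [normSq_eq_norm_sq]
    ring
  rw [im_div_eq_im_mul_conj_div_normSq, key, add_div, sum_div]
  simp only [← normSq_eq_norm_sq, normSq_div]

open Complex Finset in
theorem stmt_13_general (N s : ℕ) (q : Fin N → ℕ)
    (hq1 : ∀ j : Fin N, (j : ℕ) < s → q j = 1)
    (β : Fin N → ℂ) (hβ : ∀ j : Fin N, s ≤ (j : ℕ) → β j = 0) (r : ℝ)
    (z : Fin N → ℂ) (w : ℂ)
    (hmem : w.im = ∑ j, ‖z j‖ ^ (2 * q j))
    (δ : ℂ)
    (hδ : δ = 1 - 2 * I * (∑ j : Fin N, (if (j : ℕ) < s then z j else z j ^ q j) * (starRingEnd ℂ) (β j))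
      - ((r : ℂ) + I * ∑ j ∈ univ.filter (fun j : Fin N => (j : ℕ) < s), (‖β j‖ ^ 2 : ℝ)) * w) :
    (w / δ).im
      = (∑ j ∈ univ.filter (fun j : Fin N => (j : ℕ) < s), ‖(z j + β j * w) / δ‖ ^ 2)
        + ∑ j ∈ univ.filter (fun j : Fin N => s ≤ (j : ℕ)), ‖z j‖ ^ (2 * q j) / ‖δ‖ ^ 2 := by
  have hcross : ∑ j : Fin N, (if (j : ℕ) < s then z j else z j ^ q j) * conj (β j)
      = ∑ j ∈ univ.filter (fun j : Fin N => (j : ℕ) < s), z j * conj (β j) := by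
    rw [sum_filter]
    refine sum_congr rfl fun j _ => ?_
    split_ifs with hj
    · rfl
    · simp [hβ j (not_lt.mp hj)]
  have hw : w.im = ∑ j ∈ univ.filter (fun j : Fin N => (j : ℕ) < s), ‖z j‖ ^ 2
      + ∑ j ∈ univ.filter (fun j : Fin N => s ≤ (j : ℕ)), ‖z j‖ ^ (2 * q j) := by
    rw [hmem, ← sum_filter_add_sum_filter_not univ (fun j : Fin N => (j : ℕ) < s)]
    simp only [not_lt]
    congr 1
    exact sum_congr rfl fun j hj => by rw [hq1 j (mem_filter.mp hj).2, mul_one]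
  rw [hcross] at hδ
  rw [hδ, ← sum_div]
  exact im_div_parabolicDenom _ z β r _ w hw

open Complex Finset in
theorem stmt_13 (N s : ℕ) (hs1 : 1 ≤ s) (hsN : s ≤ N) (q : Fin N → ℕ)
    (hq1 : ∀ j : Fin N, (j : ℕ) < s → q j = 1)
    (hq2 : ∀ j : Fin N, s ≤ (j : ℕ) → 2 ≤ q j)
    (β : Fin N → ℂ) (hβ : ∀ j : Fin N, s ≤ (j : ℕ) → β j = 0) (r : ℝ)
    (z : Fin N → ℂ) (w : ℂ)
    (hmem : w.im = ∑ j, ‖z j‖ ^ (2 * q j))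
    (δ : ℂ)
    (hδ : δ = 1 - 2 * I * (∑ j : Fin N, (if (j : ℕ) < s then z j else z j ^ q j) * (starRingEnd ℂ) (β j))
      - ((r : ℂ) + I * ∑ j ∈ univ.filter (fun j : Fin N => (j : ℕ) < s), (‖β j‖ ^ 2 : ℝ)) * w)
    (hδ0 : δ ≠ 0) :
    (w / δ).im
      = (∑ j ∈ univ.filter (fun j : Fin N => (j : ℕ) < s), ‖(z j + β j * w) / δ‖ ^ 2)
        + ∑ j ∈ univ.filter (fun j : Fin N => s ≤ (j : ℕ)), ‖z j‖ ^ (2 * q j) / ‖δ‖ ^ 2 :=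
  stmt_13_general N s q hq1 β hβ r z w hmem δ hδ
end
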